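/- Let p be an odd prime and m ≥ 1 with p^m > 3, and let n ≥ 3. Let B be the additive group (ℤ/p^{3m}ℤ)^n (the direct sum of n copies of ℤ/p^{3m}ℤ) and let A be the subgroup p^{2m}·B = {p^{2m}·x : x ∈ B} of B. Then every additive automorphism of B maps A onto A, the induced restriction map ν : Aut(B) → Aut(A) (sending an automorphism of B to the automorphism of A it induces) is a surjective group homomorphism, and ν does not weakly split (it has no weak splitting). -/

import Mathlib

/-- A weak splitting of a surjective group homomorphism `ν : G → H`. -/
def IsWeakSplitting {G H : Type*} [Group G] [Group H] (ν : G →* H) (s : H → G) : Prop :=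
  (∀ h, ν (s h) = h) ∧
  ∃ G₀ : Subgroup G,
    (∀ a ∈ G₀, ∀ b ∈ G₀, a * b = b * a) ∧
    ∀ l : List (H × ℤ), (∀ p ∈ l, p.2 = 1 ∨ p.2 = -1) →
      (l.map fun p => p.1 ^ p.2).prod = 1 →
      (l.map fun p => s p.1 ^ p.2).prod ∈ G₀

/-- The multiplicative group structure on `AddAut A` that Mathlib provided in the older library
(multiplication is composition). -/
instance AddAut.groupOld (A : Type*) [Add A] : Group (AddAut A) where
  mul g h := AddEquiv.trans h g
  one := AddEquiv.refl _
  inv := AddEquiv.symm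
  mul_assoc _ _ _ := rfl
  one_mul _ := rfl
  mul_one _ := rfl
  inv_mul_cancel := AddEquiv.self_trans_symm

/-- The subgroup `k·B = {k·x : x ∈ B}` of an additive abelian group `B`. -/
def smulSubgroup (k : ℕ) (B : Type*) [AddCommGroup B] : AddSubgroup B where
  carrier := Set.range fun y : B => k • y
  zero_mem' := ⟨0, smul_zero k⟩
  add_mem' := by
    rintro _ _ ⟨y₁, rfl⟩ ⟨y₂, rfl⟩
    exact ⟨y₁ + y₂, smul_add k y₁ y₂⟩
  neg_mem' := by
    rintro _ ⟨y, rfl⟩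
    exact ⟨-y, smul_neg k y⟩

/-!
Write `q = p ^ m`, so that `B = (ℤ/q³)ⁿ`, `A = q²B`, and automorphisms of `B` are invertible
matrices over `ℤ/q³`. An automorphism acts trivially on `A` exactly when its matrix is `≡ 1 mod q`.

The transvections `U = 1 + E₀₁` and `V = 1 + E₁₂` restrict to elements `u, v` with
`u ^ q = v ^ q = 1`, so for a weak splitting `s` the elements `s u ^ q` and `s v ^ q` lie in the
commutative subgroup `G₀` and commute. On the other hand `s u ≡ U` and `s v ≡ V mod q`, and since
`q ∣ C(q, 2)` (`q` odd) and `p ∣ C(q, 3)`, the binomial expansion gives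
`s u ^ q ≡ 1 + q E₀₁` and `s v ^ q ≡ 1 + q E₁₂ mod q p`. Their commutator is then
`q² E₀₂ mod q² p`, which is not zero in `ℤ/q³`.

Surjectivity of the restriction: an automorphism of `A` lifts column by column to an endomorphism
of `B`, which is onto modulo `q` and hence onto, because `q³ B = 0`.
-/

theorem Odd.dvd_choose_two {q : ℕ} (hq : Odd q) : q ∣ q.choose 2 := by
  obtain ⟨c, rfl⟩ := hq
  exact ⟨c, by rw [Nat.choose_two_right, Nat.add_sub_cancel, mul_left_comm,
    Nat.mul_div_cancel_left _ two_pos]⟩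

theorem AddMonoidHom.surjective_of_forall_exists_eq_add_nsmul {G : Type*} [AddCommGroup G]
    (f : G →+ G) {q k : ℕ} (hk : ∀ y : G, q ^ k • y = 0) (h : ∀ y, ∃ x z, y = f x + q • z) :
    Function.Surjective f := by
  suffices ∀ j y, ∃ x z, y = f x + q ^ j • z by
    intro y
    obtain ⟨x, z, hy⟩ := this k y
    exact ⟨x, by rw [hy, hk, add_zero]⟩
  intro j
  induction j with
  | zero => exact fun y => ⟨0, y, by simp⟩
  | succ j ih =>
    intro y
    obtain ⟨x, z, rfl⟩ := ih y
    obtain ⟨x', z', rfl⟩ := h z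
    exact ⟨x + q ^ j • x', z', by rw [map_add, map_nsmul, smul_add, smul_smul, ← pow_succ,
      add_assoc]⟩

theorem Matrix.isUnit_transvection {ι R : Type*} [Fintype ι] [DecidableEq ι] [CommRing R]
    {i j : ι} (hij : i ≠ j) (c : R) : IsUnit (transvection i j c) := by
  rw [isUnit_iff_isUnit_det, det_transvection_of_ne i j hij]
  exact isUnit_one

section Ring

variable {Λ : Type*} [Ring Λ]

theorem one_add_pow_of_mul_self_eq_zero {E : Λ} (hE : E * E = 0) (k : ℕ) :
    (1 + E) ^ k = 1 + k • E := by
  induction k with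
  | zero => simp
  | succ k ih =>
    rw [pow_succ, ih, succ_nsmul]
    simp only [mul_add, add_mul, mul_one, one_mul, smul_mul_assoc, hE, smul_zero]
    abel

theorem exists_one_add_pow_eq_of_pow_four_eq {D W : Λ} {k : ℕ} (hD : D ^ 4 = k • W) (j : ℕ) :
    ∃ Θ : Λ, (1 + D) ^ j = 1 + j • D + j.choose 2 • D ^ 2 + j.choose 3 • D ^ 3 + k • Θ := by
  induction j with
  | zero => exact ⟨0, by simp⟩
  | succ j ih =>
    obtain ⟨Θ, hΘ⟩ := ih
    refine ⟨Θ + Θ * D + j.choose 3 • W, ?_⟩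
    rw [pow_succ, hΘ, Nat.choose_succ_succ, Nat.choose_succ_succ, Nat.choose_one_right]
    simp only [mul_add, add_mul, mul_one, one_mul, smul_mul_assoc, ← pow_succ, ← sq, add_smul,
      smul_add, hD, smul_comm k (j.choose 3)]
    module

theorem exists_one_add_add_nsmul_pow_eq {p q : ℕ} (hpq : p ∣ q) (hq2 : q ∣ q.choose 2)
    (hp3 : p ∣ q.choose 3) {E : Λ} (hE : E * E = 0) (a : Λ) :
    ∃ P : Λ, (1 + (E + q • a)) ^ q = 1 + q • E + (q * p) • P := by
  set X := E * a + a * E + q • (a * a)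
  have hD2 : (E + q • a) ^ 2 = q • X := by
    simp only [X, sq, mul_add, add_mul, smul_mul_assoc, mul_smul_comm, hE, zero_add]
    module
  have hD3 : (E + q • a) ^ 3 = q • (E * a * E) + (q * q) • (a * a * E + X * a) := by
    rw [pow_succ, hD2]
    simp only [X, mul_add, add_mul, smul_mul_assoc, mul_smul_comm, smul_smul, mul_assoc, hE,
      mul_zero]
    module
  have hD4 : (E + q • a) ^ 4 = (q * q) • (X * X) := by
    rw [show 4 = 2 + 2 from rfl, pow_add, hD2, smul_mul_smul_comm]
  obtain ⟨Θ, hΘ⟩ := exists_one_add_pow_eq_of_pow_four_eq hD4 q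
  obtain ⟨r, rfl⟩ := hpq
  obtain ⟨c, hc⟩ := hq2
  obtain ⟨d, hd⟩ := hp3
  refine ⟨r • a + (c * r) • X + d • (E * a * E) + (d * (p * r)) • (a * a * E + X * a) + r • Θ, ?_⟩
  rw [hΘ, hD2, hD3, hc, hd]
  simp only [smul_add, smul_smul]
  module

theorem exists_nsmul_mul_eq_of_commute {p q : ℕ} {E F P R : Λ} (hFE : F * E = 0)
    (h : Commute (1 + q • E + (q * p) • P) (1 + q • F + (q * p) • R)) :
    ∃ z : Λ, (q * q) • (E * F) = (q * q * p) • z := by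
  refine ⟨-(E * R + P * F - F * P - R * E + p • (P * R - R * P)), ?_⟩
  have := h.eq
  rw [← sub_eq_zero] at this ⊢
  rw [← this]
  simp only [mul_add, add_mul, mul_one, one_mul, smul_mul_assoc, mul_smul_comm, smul_smul, hFE,
    smul_sub, smul_neg, smul_add, smul_zero]
  module

end Ring

section CubeTorsion

variable {q : ℕ}

theorem cube_nsmul_eq_zero {ι : Type*} (x : ι → ZMod (q ^ 3)) : q ^ 3 • x = 0 := by
  ext
  simp

variable [NeZero q]

theorem ZMod.exists_nsmul_eq_of_sq_nsmul_eq_zero {t : ZMod (q ^ 3)} (h : q ^ 2 • t = 0) :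
    ∃ s : ZMod (q ^ 3), q • s = t := by
  have hdvd : q ^ 2 * q ∣ q ^ 2 * t.val := by
    rw [← pow_succ, ← ZMod.natCast_eq_zero_iff, Nat.cast_mul, ZMod.natCast_zmod_val,
      ← nsmul_eq_mul, h]
  obtain ⟨s, hs⟩ := Nat.dvd_of_mul_dvd_mul_left (pow_pos (NeZero.pos q) 2) hdvd
  exact ⟨s, by rw [nsmul_eq_mul, ← Nat.cast_mul, ← hs, ZMod.natCast_zmod_val]⟩

theorem exists_nsmul_eq_of_sq_nsmul_eq_zero {ι : Type*} {x : ι → ZMod (q ^ 3)}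
    (h : q ^ 2 • x = 0) : ∃ z, q • z = x := by
  choose z hz using fun i => ZMod.exists_nsmul_eq_of_sq_nsmul_eq_zero (congrFun h i)
  exact ⟨z, funext hz⟩

theorem ZMod.mul_self_nsmul_one_ne {p : ℕ} (hp : p ≠ 1) (hpq : p ∣ q) (w : ZMod (q ^ 3)) :
    (q * q) • (1 : ZMod (q ^ 3)) ≠ (q * q * p) • w := by
  intro h
  have hmod : q * q * 1 ≡ q * q * (p * w.val) [MOD q * q * q] := by
    rw [← pow_three', ← ZMod.natCast_eq_natCast_iff]
    rw [← ZMod.natCast_zmod_val w] at h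
    simpa [mul_assoc] using h
  have hmodp := (Nat.ModEq.mul_left_cancel' (mul_self_ne_zero.mpr (NeZero.ne q)) hmod).of_dvd hpq
  exact hp (Nat.dvd_one.mp (Nat.modEq_zero_iff_dvd.mp
    (hmodp.trans (Nat.modEq_zero_iff_dvd.mpr (dvd_mul_right p _)))))

end CubeTorsion

theorem IsWeakSplitting.commute_pow {G H : Type*} [Group G] [Group H] {ν : G →* H} {s : H → G}
    (hs : IsWeakSplitting ν s) {u v : H} {k l : ℕ} (hu : u ^ k = 1) (hv : v ^ l = 1) :
    Commute (s u ^ k) (s v ^ l) := by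
  obtain ⟨-, G₀, hG₀, hrel⟩ := hs
  have pow_mem : ∀ (w : H) (k : ℕ), w ^ k = 1 → s w ^ k ∈ G₀ := fun w k hw => by
    simpa using hrel (List.replicate k (w, 1)) (by simp +contextual) (by simpa using hw)
  exact hG₀ _ (pow_mem u k hu) _ (pow_mem v l hv)

theorem mem_smulSubgroup_iff {k : ℕ} {B : Type*} [AddCommGroup B] {x : B} :
    x ∈ smulSubgroup k B ↔ ∃ y, k • y = x :=
  Iff.rfl

instance smulSubgroup.characteristic (k : ℕ) (B : Type*) [AddCommGroup B] :
    (smulSubgroup k B).Characteristic :=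
  AddSubgroup.characteristic_iff_le_comap.mpr fun g _ ⟨y, hy⟩ => ⟨g y, by simp [← hy]⟩

open Matrix

namespace AddAut

section Restrict

variable {G : Type*} [AddGroup G] (H : AddSubgroup G) [H.Characteristic]

theorem image_coe_eq (g : AddAut G) : (⇑g) '' H = H := by
  change (g.toAddMonoidHom) '' H = H
  rw [← AddSubgroup.coe_map, AddSubgroup.characteristic_iff_map_eq.mp ‹_› g]

theorem apply_mem {g : AddAut G} {x : G} (hx : x ∈ H) : g x ∈ H :=
  AddSubgroup.characteristic_iff_le_comap.mp ‹_› g hx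

def restrict : AddAut G →* AddAut H where
  toFun g :=
    { toFun x := ⟨g x.1, apply_mem H x.2⟩
      invFun x := ⟨g.symm x.1, apply_mem H x.2⟩
      left_inv x := Subtype.ext (g.symm_apply_apply x.1)
      right_inv x := Subtype.ext (g.apply_symm_apply x.1)
      map_add' x y := Subtype.ext (map_add g x.1 y.1) }
  map_one' := rfl
  map_mul' _ _ := rfl

theorem coe_restrict_apply (g : AddAut G) (x : H) : ((restrict H g) x : G) = g x := rfl

end Restrict

section Matrix

variable {ι : Type*} [Fintype ι] [DecidableEq ι] {N : ℕ}

def toMatrix : AddAut (ι → ZMod N) →* Matrix ι ι (ZMod N) where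
  toFun g := LinearMap.toMatrix' ((g : (ι → ZMod N) →+ (ι → ZMod N)).toZModLinearMap N)
  map_one' := LinearMap.toMatrix'_id
  map_mul' _ _ := by rw [← LinearMap.toMatrix'_mul]; rfl

theorem toMatrix_mulVec (g : AddAut (ι → ZMod N)) (x : ι → ZMod N) : toMatrix g *ᵥ x = g x :=
  LinearMap.toMatrix'_mulVec _ x

theorem toMatrix_apply (g : AddAut (ι → ZMod N)) (i j : ι) :
    toMatrix g i j = g (Pi.single j 1) i :=
  LinearMap.toMatrix'_apply ((g : (ι → ZMod N) →+ (ι → ZMod N)).toZModLinearMap N) i j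

theorem exists_toMatrix_eq {M : Matrix ι ι (ZMod N)} (hM : IsUnit M) : ∃ g, toMatrix g = M := by
  let := hM.invertible
  refine ⟨(M.toLinearEquiv' this).toAddEquiv, ?_⟩
  exact (congrArg LinearMap.toMatrix' (LinearMap.ext fun _ => rfl)).trans
    (LinearMap.toMatrix'_toLin' M)

end Matrix

section SmulSubgroup

variable {ι : Type*} [Fintype ι] [DecidableEq ι] {q : ℕ}

local notation "A" => smulSubgroup (q ^ 2) (ι → ZMod (q ^ 3))

theorem exists_mulVec_sq_nsmul_eq (φ : AddAut A) :
    ∃ M : Matrix ι ι (ZMod (q ^ 3)), ∀ y, M *ᵥ (q ^ 2 • y) = φ ⟨q ^ 2 • y, y, rfl⟩ := by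
  let ψ : (ι → ZMod (q ^ 3)) →+ A := φ.toAddMonoidHom.comp <|
    AddMonoidHom.mk' (fun y => ⟨q ^ 2 • y, y, rfl⟩) fun _ _ => Subtype.ext (smul_add _ _ _)
  choose w hw using fun j => mem_smulSubgroup_iff.mp (ψ (Pi.single j 1)).2
  refine ⟨of fun i j => w j i, fun y => ?_⟩
  have hM : q ^ 2 • of (fun i j => w j i) =
      LinearMap.toMatrix' (((AddSubgroup.subtype A).comp ψ).toZModLinearMap (q ^ 3)) := by
    ext i j
    rw [LinearMap.toMatrix'_apply]
    exact congrFun (hw j) i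
  rw [mulVec_smul, ← smul_mulVec, hM, LinearMap.toMatrix'_mulVec]
  rfl

variable [NeZero q]

theorem restrict_smulSubgroup_eq_one_iff {g : AddAut (ι → ZMod (q ^ 3))} :
    restrict A g = 1 ↔ ∃ c, toMatrix g = 1 + q • c := by
  constructor
  · intro h
    have hfix : ∀ j, q ^ 2 • (g (Pi.single j 1) - Pi.single j 1) = 0 := fun j => by
      rw [smul_sub, ← map_nsmul, sub_eq_zero]
      exact congrArg Subtype.val (DFunLike.congr_fun h ⟨_, Pi.single j 1, rfl⟩)
    choose w hw using fun j => exists_nsmul_eq_of_sq_nsmul_eq_zero (hfix j)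
    refine ⟨of fun i j => w j i, ext fun i j => ?_⟩
    rw [toMatrix_apply, ← sub_add_cancel (g (Pi.single j 1)) (Pi.single j 1), ← hw j]
    simp [Matrix.one_apply, Pi.single_apply, add_comm]
  · rintro ⟨c, hc⟩
    refine AddEquiv.ext fun ⟨_, y, rfl⟩ => Subtype.ext ?_
    change g (q ^ 2 • y) = q ^ 2 • y
    rw [← toMatrix_mulVec, hc, add_mulVec, one_mulVec, smul_mulVec, mulVec_smul, smul_smul,
      ← pow_succ', cube_nsmul_eq_zero, add_zero]

theorem exists_toMatrix_eq_add_nsmul {g W : AddAut (ι → ZMod (q ^ 3))}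
    (h : restrict A g = restrict A W) : ∃ a, toMatrix g = toMatrix W + q • a := by
  obtain ⟨c, hc⟩ := restrict_smulSubgroup_eq_one_iff.mp
    (show restrict A (W⁻¹ * g) = 1 by rw [map_mul, map_inv, h, inv_mul_cancel])
  refine ⟨toMatrix W * c, ?_⟩
  rw [← mul_inv_cancel_left W g, map_mul toMatrix W, hc, mul_add, mul_one, mul_smul_comm]

theorem restrict_smulSubgroup_pow_eq_one {U : AddAut (ι → ZMod (q ^ 3))}
    {E : Matrix ι ι (ZMod (q ^ 3))} (hU : toMatrix U = 1 + E) (hE : E * E = 0) :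
    restrict A U ^ q = 1 := by
  rw [← map_pow, restrict_smulSubgroup_eq_one_iff]
  exact ⟨E, by rw [map_pow, hU, one_add_pow_of_mul_self_eq_zero hE]⟩

theorem restrict_smulSubgroup_surjective : Function.Surjective (restrict A) := by
  intro φ
  obtain ⟨M, hM⟩ := exists_mulVec_sq_nsmul_eq φ
  have hmod : ∀ y, ∃ x z, y = M *ᵥ x + q • z := fun y => by
    obtain ⟨⟨_, x, rfl⟩, hx⟩ := φ.surjective ⟨q ^ 2 • y, y, rfl⟩
    have : q ^ 2 • (M *ᵥ x - y) = 0 := by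
      rw [smul_sub, ← mulVec_smul, hM, hx, sub_self]
    obtain ⟨z, hz⟩ := exists_nsmul_eq_of_sq_nsmul_eq_zero this
    exact ⟨x, -z, by rw [smul_neg, hz]; abel⟩
  have hsurj : Function.Surjective M.mulVecLin :=
    M.mulVecLin.toAddMonoidHom.surjective_of_forall_exists_eq_add_nsmul cube_nsmul_eq_zero hmod
  refine ⟨(LinearEquiv.ofBijective M.mulVecLin
    ⟨Finite.injective_iff_surjective.mpr hsurj, hsurj⟩).toAddEquiv, ?_⟩
  exact AddEquiv.ext fun ⟨_, y, rfl⟩ => Subtype.ext (hM y)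

theorem not_exists_isWeakSplitting_restrict {p : ℕ} (hp : p ≠ 1) (hpq : p ∣ q)
    (hq2 : q ∣ q.choose 2) (hp3 : p ∣ q.choose 3) {i j k : ι} (hij : i ≠ j) (hjk : j ≠ k)
    (hik : i ≠ k) : ¬ ∃ s, IsWeakSplitting (restrict A) s := by
  rintro ⟨s, hs⟩
  set E : Matrix ι ι (ZMod (q ^ 3)) := single i j 1
  set F : Matrix ι ι (ZMod (q ^ 3)) := single j k 1
  have hEE : E * E = 0 := by simp [E, hij.symm]
  have hFF : F * F = 0 := by simp [F, hjk.symm]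
  have hFE : F * E = 0 := by simp [E, F, hik.symm]
  obtain ⟨U, hU⟩ : ∃ U, toMatrix U = 1 + E := exists_toMatrix_eq (isUnit_transvection hij 1)
  obtain ⟨V, hV⟩ : ∃ V, toMatrix V = 1 + F := exists_toMatrix_eq (isUnit_transvection hjk 1)
  obtain ⟨a, ha⟩ := exists_toMatrix_eq_add_nsmul (hs.1 (restrict A U))
  obtain ⟨b, hb⟩ := exists_toMatrix_eq_add_nsmul (hs.1 (restrict A V))
  obtain ⟨P, hP⟩ := exists_one_add_add_nsmul_pow_eq hpq hq2 hp3 hEE a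
  obtain ⟨R, hR⟩ := exists_one_add_add_nsmul_pow_eq hpq hq2 hp3 hFF b
  have hcomm := (hs.commute_pow (restrict_smulSubgroup_pow_eq_one hU hEE)
    (restrict_smulSubgroup_pow_eq_one hV hFF)).map toMatrix
  rw [map_pow, map_pow, ha, hb, hU, hV, add_assoc, add_assoc, hP, hR] at hcomm
  obtain ⟨z, hz⟩ := exists_nsmul_mul_eq_of_commute hFE hcomm
  apply ZMod.mul_self_nsmul_one_ne hp hpq (z i k)
  simpa [E, F] using congrFun (congrFun hz i) k

end SmulSubgroup

end AddAut

/-- Let `p` be an odd prime, `m ≥ 1` with `p^m > 3`, `n ≥ 3`, `B` the direct sum of `n`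
copies of `ℤ/p^{3m}ℤ` and `A = p^{2m}·B`.  Every additive automorphism of `B` maps `A`
onto `A`, the induced restriction map `ν : Aut(B) → Aut(A)` is a surjective group
homomorphism, and `ν` has no weak splitting. -/
theorem aut_restriction_not_weaklySplit
    (p m n : ℕ) (hp : p.Prime) (hodd : Odd p) (hm : 1 ≤ m) (hpm : 3 < p ^ m)
    (hn : 3 ≤ n) :
    (∀ g : AddAut (Fin n → ZMod (p ^ (3 * m))),
      (⇑g) '' (smulSubgroup (p ^ (2 * m)) (Fin n → ZMod (p ^ (3 * m))) : Set _) =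
        (smulSubgroup (p ^ (2 * m)) (Fin n → ZMod (p ^ (3 * m))) : Set _)) ∧
    ∃ ν : AddAut (Fin n → ZMod (p ^ (3 * m))) →*
        AddAut (smulSubgroup (p ^ (2 * m)) (Fin n → ZMod (p ^ (3 * m)))),
      (∀ g : AddAut (Fin n → ZMod (p ^ (3 * m))),
        ∀ x : smulSubgroup (p ^ (2 * m)) (Fin n → ZMod (p ^ (3 * m))),
          ((ν g) x : Fin n → ZMod (p ^ (3 * m))) = g (x : Fin n → ZMod (p ^ (3 * m)))) ∧
      Function.Surjective ν ∧
      ¬ ∃ s : AddAut (smulSubgroup (p ^ (2 * m)) (Fin n → ZMod (p ^ (3 * m)))) →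
          AddAut (Fin n → ZMod (p ^ (3 * m))),
        IsWeakSplitting ν s := by
  have : NeZero p := ⟨hp.ne_zero⟩
  rw [show p ^ (3 * m) = (p ^ m) ^ 3 by ring, show p ^ (2 * m) = (p ^ m) ^ 2 by ring]
  refine ⟨AddAut.image_coe_eq _, AddAut.restrict _, AddAut.coe_restrict_apply _,
    AddAut.restrict_smulSubgroup_surjective, ?_⟩
  exact AddAut.not_exists_isWeakSplitting_restrict hp.ne_one (dvd_pow_self p (by omega))
    hodd.pow.dvd_choose_two (hp.dvd_choose_pow (by norm_num) (by omega))
    (i := ⟨0, by omega⟩) (j := ⟨1, by omega⟩) (k := ⟨2, by omega⟩) (by simp) (by simp) (by simp)
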